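/- arXiv:1504.06891 — 2 statements merged into one kernel-verified Lean document; each statement's English description precedes it below -/
import Mathlib

section
/- A topological space X is strongly Fréchet if and only if for every filter F on X and every point x, the filter F converges to x exactly when x belongs to adh_Seq H for every countably generated filter H meshing with F. -/
open Filter Topology Set

/-- Two filters mesh if every member of one intersects every member of the other. -/
def Meshes {X : Type*} (F H : Filter X) : Prop :=
  ∀ A ∈ F, ∀ B ∈ H, (A ∩ B).Nonempty

/-- A sequence `x` meshes with a filter `H` if every tail of the sequence meets every
member of `H`. -/
def SeqMeshes {X : Type*} (x : ℕ → X) (H : Filter X) : Prop :=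
  ∀ B ∈ H, ∀ k : ℕ, ∃ n ≥ k, x n ∈ B

/-- The sequential adherence of a filter: the set of limits of convergent sequences
meshing with the filter. -/
def adhSeq {X : Type*} [TopologicalSpace X] (H : Filter X) : Set X :=
  {l | ∃ x : ℕ → X, Tendsto x atTop (𝓝 l) ∧ SeqMeshes x H}

/-- A strongly Fréchet space: whenever `(A n)` is a decreasing sequence of subsets and
`x` lies in the closure of every `A n`, there are points `p n ∈ A n` converging to `x`. -/
def StronglyFrechetSpace (X : Type*) [TopologicalSpace X] : Prop :=
  ∀ A : ℕ → Set X, (∀ n, A (n + 1) ⊆ A n) → ∀ x : X, (∀ n, x ∈ closure (A n)) →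
    ∃ p : ℕ → X, (∀ n, p n ∈ A n) ∧ Tendsto p atTop (𝓝 x)

theorem stmt8 {X : Type*} [TopologicalSpace X] :
    StronglyFrechetSpace X ↔
      ∀ (F : Filter X) (x : X), F ≤ 𝓝 x ↔
        ∀ H : Filter X, H.IsCountablyGenerated → Meshes F H → x ∈ adhSeq H := by
  constructor
  · intro hSF F x
    constructor
    · intro hF H hcg hmesh
      haveI := hcg
      obtain ⟨B, hB⟩ := H.exists_antitone_basis
      have hcl : ∀ n, x ∈ closure (B n) := by
        intro n
        rw [mem_closure_iff_nhds]
        intro U hU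
        exact hmesh U (hF hU) (B n) (hB.mem n)
      obtain ⟨p, hp, hpt⟩ := hSF B (fun n => hB.antitone (Nat.le_succ n)) x hcl
      refine ⟨p, hpt, ?_⟩
      intro S hS k
      obtain ⟨m, -, hm⟩ := hB.toHasBasis.mem_iff.mp hS
      exact ⟨max k m, le_max_left _ _,
        hm (hB.antitone (le_max_right k m) (hp (max k m)))⟩
    · intro h
      by_contra hF
      rw [Filter.le_def] at hF
      push_neg at hF
      obtain ⟨U, hU, hUF⟩ := hF
      have hmesh : Meshes F (𝓟 Uᶜ) := by
        intro A hA B hB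
        rw [mem_principal] at hB
        have hne : (A ∩ Uᶜ).Nonempty := by
          by_contra hemp
          rw [not_nonempty_iff_eq_empty] at hemp
          refine hUF (mem_of_superset hA ?_)
          intro a ha
          by_contra hnb
          exact absurd hemp (Set.nonempty_iff_ne_empty.mp ⟨a, ha, hnb⟩)
        exact hne.mono (inter_subset_inter_right _ hB)
      obtain ⟨y, hy, hsm⟩ := h (𝓟 Uᶜ) inferInstance hmesh
      obtain ⟨k, hk⟩ := (hy.eventually_mem hU).exists_forall_of_atTop
      obtain ⟨n, hn, hnU⟩ := hsm Uᶜ (mem_principal_self _) k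
      exact hnU (hk n hn)
  · intro h A hA x hcl
    have hAnt : Antitone A := antitone_nat_of_succ_le hA
    have hdir : Directed (· ≥ ·) A := fun m n =>
      ⟨max m n, hAnt (le_max_left m n), hAnt (le_max_right m n)⟩
    have hbasis : (⨅ n, 𝓟 (A n)).HasBasis (fun _ : ℕ => True) A :=
      hasBasis_iInf_principal hdir
    have hmesh : Meshes (𝓝 x) (⨅ n, 𝓟 (A n)) := by
      intro U hU B hB
      obtain ⟨n, -, hn⟩ := hbasis.mem_iff.mp hB
      have : (U ∩ A n).Nonempty := mem_closure_iff_nhds.mp (hcl n) U hU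
      exact this.mono (inter_subset_inter_right _ hn)
    obtain ⟨y, hy, hsm⟩ := ((h (𝓝 x) x).mp le_rfl) (⨅ n, 𝓟 (A n))
      inferInstance hmesh
    have key : ∀ n k : ℕ, ∃ m ≥ k, y m ∈ A n := fun n k =>
      hsm (A n) (mem_iInf_of_mem n (mem_principal_self _)) k
    choose g hg1 hg2 using key
    let m : ℕ → ℕ := fun n => Nat.rec (g 0 0) (fun n ih => g (n + 1) (ih + 1)) n
    have hmem : ∀ n, y (m n) ∈ A n := by
      intro n
      cases n with
      | zero => exact hg2 0 0
      | succ n => exact hg2 (n + 1) (m n + 1)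
    have hmono : StrictMono m := by
      apply strictMono_nat_of_lt_succ
      intro n
      have : m (n + 1) = g (n + 1) (m n + 1) := rfl
      rw [this]
      exact lt_of_lt_of_le (Nat.lt_succ_self _) (hg1 (n + 1) (m n + 1))
    exact ⟨fun n => y (m n), hmem, hy.comp hmono.tendsto_atTop⟩
end

section
/- A topological space X is productively Fréchet if and only if the product X × Y is strongly Fréchet for every strongly Fréchet topological space Y, and this holds if and only if X × Y is Fréchet-Urysohn for every strongly Fréchet topological space Y. -/
open Filter Topology Set
universe u

/-- The adherence of a filter: the intersection of the closures of its members. -/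
def adh {X : Type*} [TopologicalSpace X] (H : Filter X) : Set X :=
  ⋂ A ∈ H, closure A

/-- A filter `F` is strongly Fréchet if for every countably generated filter `H` meshing
with `F` there is a (proper) countably generated filter finer than both `F` and `H`. -/
def Filter.StronglyFrechet {X : Type*} (F : Filter X) : Prop :=
  ∀ H : Filter X, H.IsCountablyGenerated → Meshes F H →
    ∃ G : Filter X, G.IsCountablyGenerated ∧ G.NeBot ∧ G ≤ F ∧ G ≤ H

/-- A space is productively Fréchet if `adh H ⊆ adhSeq H` for every strongly Fréchet
filter `H` on it. -/
def ProductivelyFrechetSpace (X : Type*) [TopologicalSpace X] : Prop :=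
  ∀ H : Filter X, H.StronglyFrechet → adh H ⊆ adhSeq H
/-!
In filter language, `Y` is strongly Fréchet iff for every countably generated filter clustering
at `y` some sequence tends both to that filter and to `y`; such sequences lift along maps.

If `F` is countably generated on `X × Y` and clusters at `(x, y)`, then its trace
`H = map fst (F ⊓ comap snd (𝓝 y))` clusters at `x`, and `H` is strongly Fréchet when `Y` is:
a countably generated `K` meshing with `H` makes `y` a cluster point of
`map snd (F ⊓ comap fst K)`, and a sequence of `Y` witnessing this lifts to `X × Y`. So if `X`
is productively Fréchet, some sequence `xₙ → x` meshes with `H`, and the same lifting with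
`K = map xₙ atTop` gives a sequence tending to `F` and to `(x, y)`.

Conversely, a strongly Fréchet filter `H` on `X` makes `Option X`, where `none` has the
neighbourhoods of `pure none ⊔ map some H` and all other points are isolated, a strongly
Fréchet space. If `x` adheres to `H`, then `(x, none)` is in the closure of the diagonal
`{(z, some z)}`; a sequence `(zₙ, some zₙ)` converging to it has `zₙ → x` and `zₙ → H`.
-/

namespace Filter

variable {α β : Type*}

lemma meshes_iff_neBot_inf {F H : Filter α} : Meshes F H ↔ (F ⊓ H).NeBot :=
  inf_neBot_iff.symm

lemma seqMeshes_iff_neBot_inf {x : ℕ → α} {H : Filter α} :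
    SeqMeshes x H ↔ (map x atTop ⊓ H).NeBot := by
  simp only [SeqMeshes, inf_neBot_iff_frequently_right, frequently_map, ← frequently_atTop]
  exact ⟨fun h _ hp => h _ hp, fun h B hB => h hB⟩

lemma neBot_inf_map_fst_iff (F : Filter (α × β)) (K : Filter α) (M : Filter β) :
    (K ⊓ map Prod.fst (F ⊓ comap Prod.snd M)).NeBot ↔ (F ⊓ K ×ˢ M).NeBot := by
  rw [← Filter.push_pull', map_neBot_iff, prod_eq_inf, inf_left_comm]

lemma neBot_inf_map_snd_iff (F : Filter (α × β)) (K : Filter α) (M : Filter β) :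
    (M ⊓ map Prod.snd (F ⊓ comap Prod.fst K)).NeBot ↔ (F ⊓ K ×ˢ M).NeBot := by
  rw [← Filter.push_pull', map_neBot_iff, prod_eq_inf, inf_left_comm, inf_comm (comap _ K)]

lemma tendsto_const_of_neBot_pure_inf {F : Filter α} {y : α} (h : (pure y ⊓ F).NeBot) :
    Tendsto (fun _ : ℕ => y) atTop F := by
  refine tendsto_const_pure.mono_right (pure_le_iff.2 fun s hs => ?_)
  obtain ⟨z, hz, hzs⟩ := inf_neBot_iff.1 h (Set.mem_singleton y) hs
  rwa [Set.mem_singleton_iff.1 hz] at hzs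

end Filter

section StronglyFrechet

variable {Y : Type*} [TopologicalSpace Y]

lemma mem_adh_iff_clusterPt {H : Filter Y} {y : Y} : y ∈ adh H ↔ ClusterPt y H := by
  simp only [adh, Set.mem_iInter₂, clusterPt_iff_forall_mem_closure]

lemma StronglyFrechetSpace.frechetUrysohnSpace (hY : StronglyFrechetSpace Y) :
    FrechetUrysohnSpace Y :=
  ⟨fun s y hy => hY (fun _ => s) (fun _ => subset_rfl) y (fun _ => hy)⟩

lemma StronglyFrechetSpace.exists_seq_tendsto_map (hY : StronglyFrechetSpace Y) {Z : Type*}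
    (L : Filter Z) [L.IsCountablyGenerated] (f : Z → Y) {y : Y} (hy : ClusterPt y (map f L)) :
    ∃ q : ℕ → Z, Tendsto q atTop L ∧ Tendsto (f ∘ q) atTop (𝓝 y) := by
  obtain ⟨s, hs⟩ := L.exists_antitone_basis
  obtain ⟨p, hp, hpy⟩ := hY (fun n => f '' s n)
    (fun n => Set.image_mono (hs.antitone n.le_succ)) y
    (fun n => clusterPt_iff_forall_mem_closure.1 hy _ (image_mem_map (hs.mem n)))
  choose q hqs hqp using hp
  exact ⟨q, hs.tendsto hqs, by simpa only [Function.comp_def, hqp] using hpy⟩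

lemma stronglyFrechetSpace_of_exists_seq
    (h : ∀ (F : Filter Y) [F.IsCountablyGenerated] (y : Y), ClusterPt y F →
      ∃ q : ℕ → Y, Tendsto q atTop F ∧ Tendsto q atTop (𝓝 y)) :
    StronglyFrechetSpace Y := by
  intro A hA y hy
  have hAnti : Antitone A := antitone_nat_of_succ_le hA
  have hbasis : (⨅ n, 𝓟 (A n)).HasAntitoneBasis A := .iInf_principal hAnti
  obtain ⟨q, hqA, hqy⟩ := h (⨅ n, 𝓟 (A n)) y
    (hbasis.toHasBasis.clusterPt_iff_forall_mem_closure.2 fun n _ => hy n)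
  obtain ⟨φ, hφ, hqφ⟩ := extraction_forall_of_eventually fun n => hqA (hbasis.mem n)
  exact ⟨q ∘ φ, hqφ, hqy.comp hφ.tendsto_atTop⟩

end StronglyFrechet

section Product

variable {X Y : Type*} [TopologicalSpace Y]

lemma StronglyFrechetSpace.exists_seq_tendsto_prod (hY : StronglyFrechetSpace Y)
    (F : Filter (X × Y)) [F.IsCountablyGenerated] {y : Y} (K : Filter X) [K.IsCountablyGenerated]
    (hK : (K ⊓ map Prod.fst (F ⊓ comap Prod.snd (𝓝 y))).NeBot) :
    ∃ q : ℕ → X × Y, Tendsto q atTop F ∧ Tendsto (Prod.fst ∘ q) atTop K ∧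
      Tendsto (Prod.snd ∘ q) atTop (𝓝 y) := by
  have hy : ClusterPt y (map Prod.snd (F ⊓ comap Prod.fst K)) := by
    rwa [ClusterPt, neBot_inf_map_snd_iff, ← neBot_inf_map_fst_iff]
  obtain ⟨q, hq, hqy⟩ := hY.exists_seq_tendsto_map _ Prod.snd hy
  obtain ⟨hqF, hqK⟩ := tendsto_inf.1 hq
  exact ⟨q, hqF, tendsto_comap_iff.1 hqK, hqy⟩

lemma StronglyFrechetSpace.stronglyFrechet_map_fst (hY : StronglyFrechetSpace Y)
    (F : Filter (X × Y)) [F.IsCountablyGenerated] (y : Y) :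
    (map Prod.fst (F ⊓ comap Prod.snd (𝓝 y))).StronglyFrechet := by
  intro K hK hmesh
  rw [meshes_iff_neBot_inf, inf_comm] at hmesh
  obtain ⟨q, hqF, hqK, hqy⟩ := hY.exists_seq_tendsto_prod F K hmesh
  refine ⟨map (Prod.fst ∘ q) atTop, inferInstance, inferInstance, ?_, hqK⟩
  exact tendsto_map.comp (tendsto_inf.2 ⟨hqF, tendsto_comap_iff.2 hqy⟩)

lemma ProductivelyFrechetSpace.stronglyFrechetSpace_prod [TopologicalSpace X]
    (hX : ProductivelyFrechetSpace X)
    (hY : StronglyFrechetSpace Y) : StronglyFrechetSpace (X × Y) := by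
  refine stronglyFrechetSpace_of_exists_seq fun F _ ⟨x, y⟩ hxy => ?_
  have hx : ClusterPt x (map Prod.fst (F ⊓ comap Prod.snd (𝓝 y))) := by
    rwa [ClusterPt, neBot_inf_map_fst_iff, ← nhds_prod_eq, inf_comm]
  obtain ⟨s, hsx, hsF⟩ :=
    hX _ (hY.stronglyFrechet_map_fst F y) (mem_adh_iff_clusterPt.2 hx)
  obtain ⟨q, hqF, hqs, hqy⟩ :=
    hY.exists_seq_tendsto_prod F (map s atTop) (seqMeshes_iff_neBot_inf.1 hsF)
  exact ⟨q, hqF, (hqs.mono_right hsx).prodMk_nhds hqy⟩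

end Product

section OptionTopology

variable {X : Type*}

lemma comap_some_pure_none_sup_map_some (H : Filter X) :
    comap some (pure none ⊔ map some H) = H := by
  have : some ⁻¹' {none} = (∅ : Set X) :=
    Set.eq_empty_of_forall_notMem fun _ => Option.some_ne_none _
  rw [comap_sup, comap_map (Option.some_injective X), comap_pure, this, principal_empty,
    bot_sup_eq]

lemma Filter.StronglyFrechet.stronglyFrechetSpace_option {H : Filter X} (hH : H.StronglyFrechet) :
    @StronglyFrechetSpace (Option X) (nhdsAdjoint none (map some H)) := by
  let := nhdsAdjoint none (map some H)
  refine stronglyFrechetSpace_of_exists_seq fun F _ z hz => ?_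
  suffices (pure z ⊓ F).NeBot ∨ z = none ∧ (map some H ⊓ F).NeBot by
    rcases this with hzF | ⟨rfl, hHF⟩
    · exact ⟨fun _ => z, tendsto_const_of_neBot_pure_inf hzF, tendsto_const_nhds⟩
    rw [← Filter.push_pull, map_neBot_iff, ← meshes_iff_neBot_inf] at hHF
    obtain ⟨G, _, _, hGH, hGF⟩ := hH _ inferInstance hHF
    obtain ⟨s, hs⟩ := G.exists_seq_tendsto
    refine ⟨some ∘ s, tendsto_comap_iff.1 (hs.mono_right hGF), ?_⟩
    rw [nhds_nhdsAdjoint_same]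
    exact (tendsto_map.comp (hs.mono_right hGH)).mono_right le_sup_right
  rcases z with _ | a
  · rw [ClusterPt, nhds_nhdsAdjoint_same, inf_sup_right, sup_neBot] at hz
    exact hz.imp_right fun h => ⟨rfl, h⟩
  · rw [ClusterPt, nhds_nhdsAdjoint_of_ne _ (Option.some_ne_none a)] at hz
    exact .inl hz

lemma productivelyFrechetSpace_of_frechetUrysohnSpace_prod {X : Type u} [TopologicalSpace X]
    (h : ∀ (Y : Type u) (_ : TopologicalSpace Y),
      StronglyFrechetSpace Y → FrechetUrysohnSpace (X × Y)) :
    ProductivelyFrechetSpace X := by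
  intro H hH x hx
  let := nhdsAdjoint none (map some H)
  have := h _ _ hH.stronglyFrechetSpace_option
  have hxH : (𝓝 x ⊓ H).NeBot := mem_adh_iff_clusterPt.1 hx
  have hdiag : (x, none) ∈ closure (Set.range fun z : X => (z, some z)) := by
    refine mem_closure_of_tendsto (b := 𝓝 x ⊓ H) ?_ (.of_forall fun z => Set.mem_range_self z)
    rw [nhds_prod_eq, nhds_nhdsAdjoint_same]
    exact tendsto_inf_left tendsto_id |>.prodMk
      ((tendsto_inf_right tendsto_map).mono_right le_sup_right)
  obtain ⟨u, hu, hux⟩ := mem_closure_iff_seq_limit.1 hdiag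
  choose s hs using hu
  rw [← funext hs, nhds_prod_eq, nhds_nhdsAdjoint_same, tendsto_prod_iff'] at hux
  have hsH : Tendsto s atTop H := by
    rw [← comap_some_pure_none_sup_map_some H, tendsto_comap_iff]
    exact hux.2
  exact ⟨s, hux.1, seqMeshes_iff_neBot_inf.2 (by rw [inf_of_le_left hsH]; infer_instance)⟩

end OptionTopology

theorem stmt11 {X : Type u} [TopologicalSpace X] :
    (ProductivelyFrechetSpace X ↔
      ∀ (Y : Type u) (_ : TopologicalSpace Y),
        StronglyFrechetSpace Y → StronglyFrechetSpace (X × Y)) ∧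
    (ProductivelyFrechetSpace X ↔
      ∀ (Y : Type u) (_ : TopologicalSpace Y),
        StronglyFrechetSpace Y → FrechetUrysohnSpace (X × Y)) := by
  have toStronglyFrechet : ProductivelyFrechetSpace X → ∀ (Y : Type u) (_ : TopologicalSpace Y),
      StronglyFrechetSpace Y → StronglyFrechetSpace (X × Y) :=
    fun hX _ _ hY => hX.stronglyFrechetSpace_prod hY
  have toFrechetUrysohn : (∀ (Y : Type u) (_ : TopologicalSpace Y),
      StronglyFrechetSpace Y → StronglyFrechetSpace (X × Y)) → ∀ (Y : Type u)
      (_ : TopologicalSpace Y), StronglyFrechetSpace Y → FrechetUrysohnSpace (X × Y) :=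
    fun h Y _ hY => (h Y _ hY).frechetUrysohnSpace
  have ofFrechetUrysohn := productivelyFrechetSpace_of_frechetUrysohnSpace_prod (X := X)
  exact ⟨⟨toStronglyFrechet, ofFrechetUrysohn ∘ toFrechetUrysohn⟩,
    ⟨toFrechetUrysohn ∘ toStronglyFrechet, ofFrechetUrysohn⟩⟩
end
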